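/- Let K, K̂ be symmetric positive semidefinite n×n matrices with K ⪰ K̂, L ⪰ μI with μ > 0, γ ≥ 0, P = K̂ + γ·1_n 1_n^⊤ + L, and A = K + γ·1_n 1_n^⊤ + L. Then the condition number of P^{-1/2} A P^{-1/2} satisfies κ(P^{-1/2} A P^{-1/2}) ≤ 1 + tr(K - K̂)/μ. -/

import Mathlib

open Matrix

open scoped ComplexOrder in
/-- The positive semidefinite square root of a positive semidefinite matrix, as defined in the
older Mathlib (`Matrix.PosSemidef.sqrt`, removed since). -/
noncomputable def Matrix.PosSemidef.sqrt {n 𝕜 : Type*} [Fintype n] [RCLike 𝕜] [DecidableEq n]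
    {A : Matrix n n 𝕜} (hA : A.PosSemidef) : Matrix n n 𝕜 :=
  (hA.1.eigenvectorUnitary : Matrix n n 𝕜) * diagonal ((↑) ∘ Real.sqrt ∘ hA.1.eigenvalues) *
    (star hA.1.eigenvectorUnitary : Matrix n n 𝕜)

/-! With `S = P^{1/2}` and `A = P + (K - K̂)`, the preconditioned matrix is `S⁻¹AS⁻¹ = 1 + N`
with `N = S⁻¹(K - K̂)S⁻¹ ⪰ 0`, so its spectrum lies in `[1, 1 + tr N]`. Since `P ⪰ μ • 1`, also
`S⁻¹S⁻¹ = P⁻¹ ⪯ μ⁻¹ • 1`, whence `tr N = tr (P⁻¹(K - K̂)) ≤ tr(K - K̂)/μ`. A ratio of two numbers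
in `[1, c]` is at most `c`. -/

open scoped MatrixOrder ComplexOrder

namespace Matrix

namespace PosSemidef

variable {m 𝕜 : Type*} [Fintype m] [DecidableEq m] [RCLike 𝕜] {A B : Matrix m m 𝕜}

theorem trace_mul_nonneg (hA : A.PosSemidef) (hB : B.PosSemidef) : 0 ≤ (A * B).trace := by
  obtain ⟨X, rfl⟩ := CStarAlgebra.nonneg_iff_eq_star_mul_self.mp hB.nonneg
  rw [← Matrix.mul_assoc, trace_mul_comm, ← Matrix.mul_assoc, star_eq_conjTranspose]
  exact (hA.mul_mul_conjTranspose_same X).trace_nonneg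

theorem sqrt_eq_cfcSqrt (hA : A.PosSemidef) : hA.sqrt = CFC.sqrt A := by
  rw [CFC.sqrt_eq_cfc, cfc_nnreal_eq_real _ A hA.nonneg, hA.1.cfc_eq]
  simp [IsHermitian.cfc, PosSemidef.sqrt, Unitary.conjStarAlgAut_apply, Function.comp_def,
    max_eq_left (hA.eigenvalues_nonneg _)]

theorem sqrt_mul_sqrt (hA : A.PosSemidef) : hA.sqrt * hA.sqrt = A := by
  rw [sqrt_eq_cfcSqrt]
  exact CFC.sqrt_mul_sqrt_self A hA.nonneg

theorem posSemidef_sqrt (hA : A.PosSemidef) : hA.sqrt.PosSemidef := by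
  rw [sqrt_eq_cfcSqrt]
  exact (CFC.sqrt_nonneg A).posSemidef

theorem isUnit_sqrt (hA : A.PosSemidef) (hA' : A.PosDef) : IsUnit hA.sqrt :=
  isUnit_of_mul_isUnit_left (hA.sqrt_mul_sqrt ▸ hA'.isUnit)

end PosSemidef

variable {m : Type*} [Fintype m] [DecidableEq m]

theorem trace_mul_le_of_posSemidef_smul_one_sub {Q D : Matrix m m ℝ} {c : ℝ}
    (hQ : (c • 1 - Q).PosSemidef) (hD : D.PosSemidef) : (Q * D).trace ≤ c * D.trace := by
  have := hQ.trace_mul_nonneg hD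
  rwa [Matrix.sub_mul, trace_sub, smul_mul_assoc, Matrix.one_mul, trace_smul, smul_eq_mul,
    sub_nonneg] at this

theorem posSemidef_inv_smul_one_sub_inv_mul_inv {S : Matrix m m ℝ} (hS : S.IsHermitian)
    (hSu : IsUnit S) {μ : ℝ} (hμ : 0 < μ) (h : (S * S - μ • 1).PosSemidef) :
    (μ⁻¹ • 1 - S⁻¹ * S⁻¹).PosSemidef := by
  have hSdet := (isUnit_iff_isUnit_det S).mp hSu
  have hconj : S⁻¹ * (S * S - μ • 1) * S⁻¹ = μ • (μ⁻¹ • 1 - S⁻¹ * S⁻¹) := by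
    rw [smul_sub, smul_smul, mul_inv_cancel₀ hμ.ne', one_smul, Matrix.mul_sub, Matrix.sub_mul,
      ← Matrix.mul_assoc, Matrix.mul_assoc (S⁻¹ * S), nonsing_inv_mul S hSdet, Matrix.one_mul,
      mul_nonsing_inv S hSdet, Matrix.mul_smul, Matrix.mul_one, Matrix.smul_mul]
  have := (h.conjTranspose_mul_mul_same S⁻¹).smul (inv_nonneg.mpr hμ.le)
  rwa [hS.inv.eq, hconj, smul_smul, inv_mul_cancel₀ hμ.ne', one_smul] at this

theorem trace_inv_mul_mul_inv_le {S D : Matrix m m ℝ} (hS : S.IsHermitian) (hSu : IsUnit S)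
    {μ : ℝ} (hμ : 0 < μ) (h : (S * S - μ • 1).PosSemidef) (hD : D.PosSemidef) :
    (S⁻¹ * D * S⁻¹).trace ≤ D.trace / μ := by
  rw [trace_mul_cycle, div_eq_inv_mul]
  exact trace_mul_le_of_posSemidef_smul_one_sub
    (posSemidef_inv_smul_one_sub_inv_mul_inv hS hSu hμ h) hD

theorem PosSemidef.spectrum_subset_Icc_trace {N : Matrix m m ℝ} (hN : N.PosSemidef) :
    spectrum ℝ N ⊆ Set.Icc 0 N.trace := by
  rw [hN.1.spectrum_real_eq_range_eigenvalues, Set.range_subset_iff]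
  intro i
  refine ⟨hN.eigenvalues_nonneg i, ?_⟩
  rw [hN.1.trace_eq_sum_eigenvalues]
  exact Finset.single_le_sum (fun j _ => hN.eigenvalues_nonneg j) (Finset.mem_univ i)

theorem PosSemidef.spectrum_one_add_subset_Icc {N : Matrix m m ℝ} (hN : N.PosSemidef) :
    spectrum ℝ (1 + N) ⊆ Set.Icc 1 (1 + N.trace) := by
  intro a ha
  rw [← sub_add_cancel a 1, spectrum.add_mem_iff, map_one, neg_add_cancel_left] at ha
  obtain ⟨h0, htr⟩ := hN.spectrum_subset_Icc_trace ha
  constructor <;> linarith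

end Matrix

theorem stmt_6_general {n : ℕ} (K Khat L : Matrix (Fin n) (Fin n) ℝ) (μ γ : ℝ)
    (hμ : 0 < μ) (hγ : 0 ≤ γ)
    (hKhat : Khat.PosSemidef) (hKKhat : (K - Khat).PosSemidef)
    (hL : (L - μ • (1 : Matrix (Fin n) (Fin n) ℝ)).PosSemidef)
    (P A : Matrix (Fin n) (Fin n) ℝ)
    (hPdef : P = Khat + γ • Matrix.vecMulVec (fun _ => (1 : ℝ)) (fun _ => (1 : ℝ)) + L)
    (hAdef : A = K + γ • Matrix.vecMulVec (fun _ => (1 : ℝ)) (fun _ => (1 : ℝ)) + L)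
    (hP : P.PosSemidef) :
    ∀ a ∈ spectrum ℝ ((Matrix.PosSemidef.sqrt hP)⁻¹ * A * (Matrix.PosSemidef.sqrt hP)⁻¹),
      ∀ b ∈ spectrum ℝ ((Matrix.PosSemidef.sqrt hP)⁻¹ * A * (Matrix.PosSemidef.sqrt hP)⁻¹),
        a / b ≤ 1 + (K - Khat).trace / μ := by
  set S := hP.sqrt
  have hPμ : (P - μ • 1).PosSemidef := by
    rw [hPdef, add_sub_assoc]
    exact (hKhat.add ((posSemidef_vecMulVec_self_star _).smul hγ)).add hL
  have hSS : S * S = P := hP.sqrt_mul_sqrt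
  have hSu : IsUnit S :=
    hP.isUnit_sqrt (sub_add_cancel P (μ • 1) ▸ PosDef.posSemidef_add hPμ (PosDef.one.smul hμ))
  have hS : S.IsHermitian := hP.posSemidef_sqrt.1
  have hM : S⁻¹ * A * S⁻¹ = 1 + S⁻¹ * (K - Khat) * S⁻¹ := by
    have hAP : A = S * S + (K - Khat) := by rw [hSS, hAdef, hPdef]; abel
    have hSdet := (isUnit_iff_isUnit_det S).mp hSu
    rw [hAP, Matrix.mul_add, Matrix.add_mul, ← Matrix.mul_assoc, nonsing_inv_mul S hSdet,
      Matrix.one_mul, mul_nonsing_inv S hSdet]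
  have hN : (S⁻¹ * (K - Khat) * S⁻¹).PosSemidef := by
    simpa only [hS.inv.eq] using hKKhat.conjTranspose_mul_mul_same S⁻¹
  have htr := trace_inv_mul_mul_inv_le hS hSu hμ (hSS ▸ hPμ) hKKhat
  intro a ha b hb
  rw [hM] at ha hb
  obtain ⟨ha₁, ha⟩ := hN.spectrum_one_add_subset_Icc ha
  obtain ⟨hb, -⟩ := hN.spectrum_one_add_subset_Icc hb
  calc a / b ≤ a := div_le_self (by linarith) hb
    _ ≤ 1 + (K - Khat).trace / μ := by linarith

/-- Condition number bound for the preconditioned matrix: every ratio of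
eigenvalues of `P^{-1/2} A P^{-1/2}` is at most `1 + tr(K - K̂)/μ`. -/
theorem stmt_6 {n : ℕ} (K Khat L : Matrix (Fin n) (Fin n) ℝ) (μ γ : ℝ)
    (hμ : 0 < μ) (hγ : 0 ≤ γ)
    (hK : K.PosSemidef) (hKhat : Khat.PosSemidef) (hKKhat : (K - Khat).PosSemidef)
    (hLsym : L.IsHermitian) (hL : (L - μ • (1 : Matrix (Fin n) (Fin n) ℝ)).PosSemidef)
    (P A : Matrix (Fin n) (Fin n) ℝ)
    (hPdef : P = Khat + γ • Matrix.vecMulVec (fun _ => (1 : ℝ)) (fun _ => (1 : ℝ)) + L)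
    (hAdef : A = K + γ • Matrix.vecMulVec (fun _ => (1 : ℝ)) (fun _ => (1 : ℝ)) + L)
    (hP : P.PosSemidef) :
    ∀ a ∈ spectrum ℝ ((Matrix.PosSemidef.sqrt hP)⁻¹ * A * (Matrix.PosSemidef.sqrt hP)⁻¹),
      ∀ b ∈ spectrum ℝ ((Matrix.PosSemidef.sqrt hP)⁻¹ * A * (Matrix.PosSemidef.sqrt hP)⁻¹),
        a / b ≤ 1 + (K - Khat).trace / μ :=
  stmt_6_general K Khat L μ γ hμ hγ hKhat hKKhat hL P A hPdef hAdef hP
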